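/- arXiv:0709.0283 — 2 statements merged into one kernel-verified Lean document; each statement's English description precedes it below -/
import Mathlib

section
/- Suppose Σ, Σ' ∈ P(X) are irreducible collections of partial splits and C is an X-cycle. If Σ' is obtained from Σ by a single application of the M-rule θ_M, then Σ is displayed by C if and only if Σ' is displayed by C. -/
/-!
Common definitions: partial splits of a finite set `X`, modelled as unordered
pairs (`Sym2`) of nonempty disjoint subsets of `X`; the `M`-, `Y`- and `Z`-
closure rules; weak compatibility; `X`-cycles and display; split closure
sequences and split closures.
-/

variable {X : Type*}

/-- `S` is a partial split of `X`: an unordered pair of nonempty disjoint subsets of `X`. -/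
def IsPartialSplit (S : Sym2 (Set X)) : Prop :=
  ∃ A B : Set X, S = s(A, B) ∧ A.Nonempty ∧ B.Nonempty ∧ Disjoint A B

/-- `S` is a full split of `X`: a partial split whose two parts cover `X`. -/
def IsFullSplit (S : Sym2 (Set X)) : Prop :=
  ∃ A B : Set X, S = s(A, B) ∧ A.Nonempty ∧ B.Nonempty ∧ Disjoint A B ∧ A ∪ B = Set.univ

/-- The partial split `S` extends the partial split `T`. -/
def SplitExtends (S T : Sym2 (Set X)) : Prop :=
  ∃ A B C D : Set X, S = s(A, B) ∧ T = s(C, D) ∧ C ⊆ A ∧ D ⊆ B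

/-- `Sig ⪯ Sig'`: every partial split of `Sig` is extended by one of `Sig'`. -/
def Preceq (Sig Sig' : Set (Sym2 (Set X))) : Prop :=
  ∀ S ∈ Sig, ∃ T ∈ Sig', SplitExtends T S

/-- `Sig⁻`: the set obtained from `Sig` by removing all redundant partial splits,
i.e. those extended by a different element of `Sig`. -/
def sreduce (Sig : Set (Sym2 (Set X))) : Set (Sym2 (Set X)) :=
  {S | S ∈ Sig ∧ ¬ ∃ T ∈ Sig, T ≠ S ∧ SplitExtends T S}

/-- `Sig ∈ P(X)`: `Sig` is an irreducible collection of partial splits of `X`. -/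
def InPX (Sig : Set (Sym2 (Set X))) : Prop :=
  (∀ S ∈ Sig, IsPartialSplit S) ∧ sreduce Sig = Sig

/-- Two partial splits are compatible if some part of one is disjoint from some part
of the other. -/
def SplitCompatible (S T : Sym2 (Set X)) : Prop :=
  ∃ A B C D : Set X, S = s(A, B) ∧ T = s(C, D) ∧ A ∩ C = ∅

/-- Weak compatibility of a (multi)triple of partial splits: for every choice of parts,
one of the four distinguished triple intersections is empty. -/
def WeaklyCompatTriple (S1 S2 S3 : Sym2 (Set X)) : Prop :=
  ∀ A1 B1 A2 B2 A3 B3 : Set X,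
    S1 = s(A1, B1) → S2 = s(A2, B2) → S3 = s(A3, B3) →
    A1 ∩ A2 ∩ A3 = ∅ ∨ B1 ∩ B2 ∩ A3 = ∅ ∨ B1 ∩ A2 ∩ B3 = ∅ ∨ A1 ∩ B2 ∩ B3 = ∅

/-- A collection of partial splits is weakly compatible if every three of its members are. -/
def WeaklyCompatible (Sig : Set (Sym2 (Set X))) : Prop :=
  ∀ S1 ∈ Sig, ∀ S2 ∈ Sig, ∀ S3 ∈ Sig, WeaklyCompatTriple S1 S2 S3

/-- Condition of the `M`-rule for the parts `A1|B1`, `A2|B2`. -/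
def mCond (A1 B1 A2 B2 : Set X) : Prop :=
  (A1 ∩ A2).Nonempty ∧ (B1 ∩ B2).Nonempty

/-- Output of the `M`-rule applied with respect to the parts `A1|B1`, `A2|B2`. -/
def mOut (A1 B1 A2 B2 : Set X) : Set (Sym2 (Set X)) :=
  {s(A1, B1), s(A2, B2), s(A1 ∩ A2, B1 ∪ B2), s(B1 ∩ B2, A1 ∪ A2)}

/-- Condition of the `Y`-rule for the parts `A1|B1`, `A2|B2`, `A3|B3`. -/
def yCond (A1 B1 A2 B2 A3 B3 : Set X) : Prop :=
  (A1 ∩ A2 ∩ A3).Nonempty ∧ (B1 ∩ B2 ∩ A3).Nonempty ∧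
    (B1 ∩ A2 ∩ B3).Nonempty ∧ A1 ∩ B2 ∩ B3 = ∅

/-- Output of the `Y`-rule applied with respect to the parts `A1|B1`, `A2|B2`, `A3|B3`. -/
def yOut (A1 B1 A2 B2 A3 B3 : Set X) : Set (Sym2 (Set X)) :=
  {s(B1 ∪ (B2 ∩ B3), A1), s(A2 ∪ (A1 ∩ B3), B2), s(A3 ∪ (A1 ∩ B2), B3)}

/-- Condition of the `Z`-rule for the parts `A1|B1`, `A2|B2`. -/
def zCond (A1 B1 A2 B2 : Set X) : Prop :=
  (A1 ∩ A2).Nonempty ∧ (A2 ∩ B1).Nonempty ∧ (B1 ∩ B2).Nonempty ∧ A1 ∩ B2 = ∅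

/-- Output of the `Z`-rule applied with respect to the parts `A1|B1`, `A2|B2`. -/
def zOut (A1 B1 A2 B2 : Set X) : Set (Sym2 (Set X)) :=
  {s(B1 ∪ B2, A1), s(B2, A1 ∪ A2)}

/-- `Sig'` is obtained from `Sig` by a single application of the `Y`-rule. -/
def yStep (Sig Sig' : Set (Sym2 (Set X))) : Prop :=
  ∃ A1 B1 A2 B2 A3 B3 : Set X,
    s(A1, B1) ∈ Sig ∧ s(A2, B2) ∈ Sig ∧ s(A3, B3) ∈ Sig ∧
    s(A1, B1) ≠ s(A2, B2) ∧ s(A1, B1) ≠ s(A3, B3) ∧ s(A2, B2) ≠ s(A3, B3) ∧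
    yCond A1 B1 A2 B2 A3 B3 ∧
    Sig' = sreduce (Sig ∪ yOut A1 B1 A2 B2 A3 B3)

/-- `Sig'` is obtained from `Sig` by a single application of the `M`-rule. -/
def mStep (Sig Sig' : Set (Sym2 (Set X))) : Prop :=
  ∃ A1 B1 A2 B2 : Set X,
    s(A1, B1) ∈ Sig ∧ s(A2, B2) ∈ Sig ∧ s(A1, B1) ≠ s(A2, B2) ∧
    mCond A1 B1 A2 B2 ∧
    Sig' = sreduce (Sig ∪ mOut A1 B1 A2 B2)

/-- `Sig'` is obtained from `Sig` by a single non-trivial application of the `Y`-rule. -/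
def yStepNT (Sig Sig' : Set (Sym2 (Set X))) : Prop :=
  ∃ A1 B1 A2 B2 A3 B3 : Set X,
    s(A1, B1) ∈ Sig ∧ s(A2, B2) ∈ Sig ∧ s(A3, B3) ∈ Sig ∧
    s(A1, B1) ≠ s(A2, B2) ∧ s(A1, B1) ≠ s(A3, B3) ∧ s(A2, B2) ≠ s(A3, B3) ∧
    yCond A1 B1 A2 B2 A3 B3 ∧
    ¬ Preceq (sreduce (yOut A1 B1 A2 B2 A3 B3)) Sig ∧
    Sig' = sreduce (Sig ∪ yOut A1 B1 A2 B2 A3 B3)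

/-- `Sig'` is obtained from `Sig` by a single non-trivial application of the `M`-rule. -/
def mStepNT (Sig Sig' : Set (Sym2 (Set X))) : Prop :=
  ∃ A1 B1 A2 B2 : Set X,
    s(A1, B1) ∈ Sig ∧ s(A2, B2) ∈ Sig ∧ s(A1, B1) ≠ s(A2, B2) ∧
    mCond A1 B1 A2 B2 ∧
    ¬ Preceq (sreduce (mOut A1 B1 A2 B2)) Sig ∧
    Sig' = sreduce (Sig ∪ mOut A1 B1 A2 B2)

/-- `Sig` is closed under the `Y`-rule: every application of the `Y`-rule to `Sig` is trivial. -/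
def yClosed (Sig : Set (Sym2 (Set X))) : Prop :=
  ∀ A1 B1 A2 B2 A3 B3 : Set X,
    s(A1, B1) ∈ Sig → s(A2, B2) ∈ Sig → s(A3, B3) ∈ Sig →
    s(A1, B1) ≠ s(A2, B2) → s(A1, B1) ≠ s(A3, B3) → s(A2, B2) ≠ s(A3, B3) →
    yCond A1 B1 A2 B2 A3 B3 →
    Preceq (sreduce (yOut A1 B1 A2 B2 A3 B3)) Sig

/-- `Sig` is closed under the `M`-rule: every application of the `M`-rule to `Sig` is trivial. -/
def mClosed (Sig : Set (Sym2 (Set X))) : Prop :=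
  ∀ A1 B1 A2 B2 : Set X,
    s(A1, B1) ∈ Sig → s(A2, B2) ∈ Sig → s(A1, B1) ≠ s(A2, B2) →
    mCond A1 B1 A2 B2 →
    Preceq (sreduce (mOut A1 B1 A2 B2)) Sig

/-- A split closure sequence for `Sig` of length `n` with respect to the property `P` and
the non-trivial single-application relation `stepNT`: a strictly `⪯`-increasing sequence
in `P(X)` starting at `Sig` in which every term satisfying `P` is followed by the result
of one non-trivial application of the rule. -/
def IsClosureSeq (P : Set (Sym2 (Set X)) → Prop)
    (stepNT : Set (Sym2 (Set X)) → Set (Sym2 (Set X)) → Prop)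
    (Sig : Set (Sym2 (Set X))) (n : ℕ) (f : ℕ → Set (Sym2 (Set X))) : Prop :=
  f 0 = Sig ∧ (∀ i ≤ n, InPX (f i)) ∧
    (∀ i < n, P (f i) ∧ stepNT (f i) (f (i + 1)) ∧
      Preceq (f i) (f (i + 1)) ∧ f i ≠ f (i + 1))

/-- `cl` is a split closure of `Sig` (with `cl = none` playing the role of `ω`):
the last element of a split closure sequence for `Sig`, which either satisfies `P` and is
closed under the rule, or fails `P`, in which case it is replaced by `ω`. -/
def IsSplitClosure (P : Set (Sym2 (Set X)) → Prop)
    (stepNT : Set (Sym2 (Set X)) → Set (Sym2 (Set X)) → Prop)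
    (closed : Set (Sym2 (Set X)) → Prop)
    (Sig : Set (Sym2 (Set X))) (cl : Option (Set (Sym2 (Set X)))) : Prop :=
  ∃ (n : ℕ) (f : ℕ → Set (Sym2 (Set X))),
    IsClosureSeq P stepNT Sig n f ∧
    ((P (f n) ∧ closed (f n) ∧ cl = some (f n)) ∨ (¬ P (f n) ∧ cl = none))

/-- Split closure with respect to the `Y`-rule, `(P)` being weak compatibility. -/
def IsYClosure (Sig : Set (Sym2 (Set X))) (cl : Option (Set (Sym2 (Set X)))) : Prop :=
  IsSplitClosure WeaklyCompatible yStepNT yClosed Sig cl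

/-- Split closure with respect to the `M`-rule, `(P)` holding for all collections. -/
def IsMClosure (Sig : Set (Sym2 (Set X))) (cl : Option (Set (Sym2 (Set X)))) : Prop :=
  IsSplitClosure (fun _ => True) mStepNT mClosed Sig cl

/-- Split closure with respect to the combined `M/Y`-rule, `(P)` being weak compatibility. -/
def IsMYClosure (Sig : Set (Sym2 (Set X))) (cl : Option (Set (Sym2 (Set X)))) : Prop :=
  IsSplitClosure WeaklyCompatible
    (fun s s' => mStepNT s s' ∨ yStepNT s s') (fun s => mClosed s ∧ yClosed s) Sig cl

/-- `C` is an `X`-cycle: a connected graph on the vertex set `X` (`|X| ≥ 3`) in which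
every vertex has degree `2`. -/
def IsXCycle (C : SimpleGraph X) : Prop :=
  C.Connected ∧ 3 ≤ Nat.card X ∧ ∀ v : X, (C.neighborSet v).ncard = 2

/-- The partial split `S` is displayed by the `X`-cycle `C`: there are two distinct
edges of `C` whose deletion leaves one component containing one part of `S` and
another component containing the other part. -/
def DisplaysSplit (C : SimpleGraph X) (S : Sym2 (Set X)) : Prop :=
  ∃ A B : Set X, S = s(A, B) ∧
    ∃ e1 e2 : Sym2 X, e1 ∈ C.edgeSet ∧ e2 ∈ C.edgeSet ∧ e1 ≠ e2 ∧
      ∃ c1 c2 : (C.deleteEdges {e1, e2}).ConnectedComponent,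
        c1 ≠ c2 ∧ A ⊆ c1.supp ∧ B ⊆ c2.supp

/-- A collection of partial splits is displayed by `C` if each of its members is. -/
def DisplaysColl (C : SimpleGraph X) (Sig : Set (Sym2 (Set X))) : Prop :=
  ∀ S ∈ Sig, DisplaysSplit C S

/-- `cl ≠ ω` and the underlying collection is displayed by `C`. -/
def OptionDisplays (C : SimpleGraph X) (cl : Option (Set (Sym2 (Set X)))) : Prop :=
  ∃ Sig, cl = some Sig ∧ DisplaysColl C Sig

/-- The ground set `A ∪ B` of a partial split `A|B`. -/
def splitGround (S : Sym2 (Set X)) : Set X :=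
  ⋃₀ {A : Set X | A ∈ S}

/-- Membership in `P_ω(X) = P(X) ∪ {ω}`. -/
def InPOmega (x : Option (Set (Sym2 (Set X)))) : Prop :=
  x = none ∨ ∃ Sig, x = some Sig ∧ InPX Sig

/-- The order `⪯` on `P_ω(X)`, with `Sig ⪯ ω` for all `Sig` and `ω ⪯ ω`. -/
def PreceqO (x y : Option (Set (Sym2 (Set X)))) : Prop :=
  y = none ∨ ∃ Sig Sig', x = some Sig ∧ y = some Sig' ∧ Preceq Sig Sig'

/-- Split closure as a relation on `P_ω(X)`, with `⟨ω⟩ = ω`. -/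
def ClosO (cls : Set (Sym2 (Set X)) → Option (Set (Sym2 (Set X))) → Prop)
    (x y : Option (Set (Sym2 (Set X)))) : Prop :=
  (x = none ∧ y = none) ∨ ∃ Sig, x = some Sig ∧ cls Sig y

/-!
A split `A|B` is displayed by a cycle `C` iff some vertex set `V` with `A ⊆ V` and `B ⊆ Vᶜ`
is cut off by exactly two edges. A connected union of cycles has no bridges, so every proper
nonempty vertex set is cut by at least two edges; since cut sizes are submodular, two-edge
arcs `V`, `W` witnessing `A₁|B₁` and `A₂|B₂` give two-edge arcs `V ∩ W` and `(V ∪ W)ᶜ`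
witnessing the two new splits of the `M`-rule. Conversely, reduction only removes splits
extended by surviving ones, and a display of a split displays every split it extends.
-/

open scoped symmDiff

namespace SimpleGraph

variable {G : SimpleGraph X} {S : Set (Sym2 X)} {V W : Set X} {u v x y : X}

def edgeCut (G : SimpleGraph X) (V : Set X) : Set (Sym2 X) :=
  {e | ∃ x y, e = s(x, y) ∧ G.Adj x y ∧ x ∈ V ∧ y ∉ V}

theorem mk_mem_edgeCut : s(x, y) ∈ G.edgeCut V ↔ G.Adj x y ∧ (x ∈ V ↔ y ∉ V) := by
  constructor
  · rintro ⟨a, b, hab, hadj, ha, hb⟩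
    rcases Sym2.eq_iff.1 hab with ⟨rfl, rfl⟩ | ⟨rfl, rfl⟩
    · tauto
    · exact ⟨hadj.symm, by tauto⟩
  · rintro ⟨hadj, hxy⟩
    by_cases hx : x ∈ V
    · exact ⟨x, y, rfl, hadj, hx, hxy.1 hx⟩
    · exact ⟨y, x, Sym2.eq_swap, hadj.symm, by tauto, hx⟩

theorem edgeCut_subset_edgeSet : G.edgeCut V ⊆ G.edgeSet := by
  rintro _ ⟨x, y, rfl, hadj, -, -⟩
  exact hadj

theorem edgeCut_compl : G.edgeCut Vᶜ = G.edgeCut V := by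
  ext e
  induction e using Sym2.ind
  simp only [mk_mem_edgeCut, Set.mem_compl_iff]
  tauto

theorem edgeCut_symmDiff : G.edgeCut (V ∆ W) = G.edgeCut V ∆ G.edgeCut W := by
  ext e
  induction e using Sym2.ind
  simp only [mk_mem_edgeCut, Set.mem_symmDiff]
  tauto

theorem edgeCut_deleteEdges : (G.deleteEdges S).edgeCut V = G.edgeCut V \ S := by
  ext e
  induction e using Sym2.ind
  simp only [mk_mem_edgeCut, deleteEdges_adj, Set.mem_sdiff]
  tauto

theorem ncard_edgeCut_inter_add_ncard_edgeCut_union_le [Finite X] (V W : Set X) :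
    (G.edgeCut (V ∩ W)).ncard + (G.edgeCut (V ∪ W)).ncard ≤
      (G.edgeCut V).ncard + (G.edgeCut W).ncard := by
  have hunion : G.edgeCut (V ∩ W) ∪ G.edgeCut (V ∪ W) ⊆ G.edgeCut V ∪ G.edgeCut W := by
    intro e
    induction e using Sym2.ind
    simp only [Set.mem_union, Set.mem_inter_iff, mk_mem_edgeCut]
    tauto
  have hinter : G.edgeCut (V ∩ W) ∩ G.edgeCut (V ∪ W) ⊆ G.edgeCut V ∩ G.edgeCut W := by
    intro e
    induction e using Sym2.ind
    simp only [Set.mem_union, Set.mem_inter_iff, mk_mem_edgeCut]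
    tauto
  calc (G.edgeCut (V ∩ W)).ncard + (G.edgeCut (V ∪ W)).ncard
      = (G.edgeCut (V ∩ W) ∪ G.edgeCut (V ∪ W)).ncard +
          (G.edgeCut (V ∩ W) ∩ G.edgeCut (V ∪ W)).ncard :=
        (Set.ncard_union_add_ncard_inter _ _).symm
    _ ≤ (G.edgeCut V ∪ G.edgeCut W).ncard + (G.edgeCut V ∩ G.edgeCut W).ncard :=
        add_le_add (Set.ncard_le_ncard hunion) (Set.ncard_le_ncard hinter)
    _ = (G.edgeCut V).ncard + (G.edgeCut W).ncard := Set.ncard_union_add_ncard_inter _ _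

theorem Reachable.edgeCut_nonempty (h : G.Reachable u v) (hu : u ∈ V) (hv : v ∉ V) :
    (G.edgeCut V).Nonempty := by
  obtain ⟨p⟩ := h
  induction p with
  | nil => exact absurd hu hv
  | @cons a b _ hadj _ ih =>
    by_cases hb : b ∈ V
    · exact ih hb hv
    · exact ⟨s(a, b), a, b, rfl, hadj, hu, hb⟩

theorem not_reachable_deleteEdges_edgeCut (hu : u ∈ V) (hv : v ∉ V) :
    ¬(G.deleteEdges (G.edgeCut V)).Reachable u v := fun h => by
  simpa [edgeCut_deleteEdges] using h.edgeCut_nonempty hu hv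

theorem ConnectedComponent.edgeCut_supp_subset (c : (G.deleteEdges S).ConnectedComponent) :
    G.edgeCut c.supp ⊆ S := by
  rintro _ ⟨x, y, rfl, hadj, hx, hy⟩
  by_contra he
  rw [ConnectedComponent.mem_supp_iff] at hx hy
  exact hy (hx ▸ ConnectedComponent.eq.2 (deleteEdges_adj.2 ⟨hadj, he⟩).reachable.symm)

section Cycles

variable [Finite X]

/-- A union of cycles has no bridges, so no cut consists of a single edge. -/
theorem IsCycles.two_le_ncard_edgeCut (hcyc : G.IsCycles) (hconn : G.Preconnected)
    (hu : u ∈ V) (hv : v ∉ V) : 2 ≤ (G.edgeCut V).ncard := by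
  obtain ⟨_, x, y, rfl, hadj, hx, hy⟩ := (hconn u v).edgeCut_nonempty hu hv
  obtain ⟨e, he⟩ := (hcyc.reachable_deleteEdges hadj).edgeCut_nonempty hx hy
  rw [edgeCut_deleteEdges] at he
  exact (Set.one_lt_ncard_iff).2 ⟨e, s(x, y), he.1, ⟨x, y, rfl, hadj, hx, hy⟩, he.2⟩

theorem IsCycles.reachable_deleteEdges_edgeCut (hcyc : G.IsCycles) (hconn : G.Preconnected)
    (hcut : (G.edgeCut V).ncard = 2)
    (hu : u ∈ V) (hv : v ∈ V) : (G.deleteEdges (G.edgeCut V)).Reachable u v := by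
  -- If the component `c` of `u` missed `v`, its cut would be the two cut edges of `V`,
  -- leaving `V ∆ c ∋ v` with no cut edge at all.
  set c := (G.deleteEdges (G.edgeCut V)).connectedComponentMk u
  by_contra huv
  have hvc : v ∉ c.supp := fun h => huv (ConnectedComponent.eq.1 h).symm
  have hcut_eq : G.edgeCut c.supp = G.edgeCut V :=
    Set.eq_of_subset_of_ncard_le c.edgeCut_supp_subset
      (hcut ▸ hcyc.two_le_ncard_edgeCut hconn (c.mem_supp_iff u |>.2 rfl) hvc)
  have := (hconn v u).edgeCut_nonempty (V := V ∆ c.supp) (Or.inl ⟨hv, hvc⟩)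
    (by simp [Set.mem_symmDiff, hu, c])
  rw [edgeCut_symmDiff, hcut_eq, symmDiff_self] at this
  exact Set.not_nonempty_empty this

theorem IsCycles.ncard_edgeCut_supp_eq_two (hcyc : G.IsCycles) (hconn : G.Preconnected)
    {e₁ e₂ : Sym2 X} {c d : (G.deleteEdges {e₁, e₂}).ConnectedComponent} (hcd : c ≠ d) :
    (G.edgeCut c.supp).ncard = 2 := by
  have hle : ({e₁, e₂} : Set (Sym2 X)).ncard ≤ 2 := by simpa using Set.ncard_insert_le e₁ {e₂}
  refine le_antisymm ((Set.ncard_le_ncard c.edgeCut_supp_subset).trans hle) ?_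
  obtain ⟨u, hu⟩ := c.nonempty_supp
  obtain ⟨v, hv⟩ := d.nonempty_supp
  exact hcyc.two_le_ncard_edgeCut hconn hu fun hvc => hcd (hvc.symm.trans hv)

end Cycles

end SimpleGraph

open SimpleGraph

section Display

variable [Finite X] {C : SimpleGraph X}

theorem displaysSplit_mk_iff (hcyc : C.IsCycles) (hconn : C.Preconnected) {A B : Set X} :
    DisplaysSplit C s(A, B) ↔ ∃ V, A ⊆ V ∧ B ⊆ Vᶜ ∧ (C.edgeCut V).ncard = 2 := by
  constructor
  · rintro ⟨A', B', hAB, e₁, e₂, -, -, -, c₁, c₂, hc, hA, hB⟩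
    have arc : ∀ {c d : (C.deleteEdges {e₁, e₂}).ConnectedComponent}, c ≠ d →
        ∃ V, c.supp ⊆ V ∧ d.supp ⊆ Vᶜ ∧ (C.edgeCut V).ncard = 2 := fun hcd =>
      ⟨_, subset_rfl, fun x hd hc => hcd (hc.symm.trans hd),
        hcyc.ncard_edgeCut_supp_eq_two hconn hcd⟩
    rcases Sym2.eq_iff.1 hAB with ⟨rfl, rfl⟩ | ⟨rfl, rfl⟩
    · obtain ⟨V, hV⟩ := arc hc
      exact ⟨V, hA.trans hV.1, hB.trans hV.2.1, hV.2.2⟩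
    · obtain ⟨V, hV⟩ := arc hc.symm
      exact ⟨V, hB.trans hV.1, hA.trans hV.2.1, hV.2.2⟩
  · rintro ⟨V, hA, hB, hcut⟩
    obtain ⟨e₁, e₂, hne, he⟩ := Set.ncard_eq_two.1 hcut
    obtain ⟨x, y, -, -, hx, hy⟩ : e₁ ∈ C.edgeCut V := he ▸ Set.mem_insert _ _
    have hcutc : (C.edgeCut Vᶜ).ncard = 2 := by rwa [edgeCut_compl]
    have hsides : ∃ c₁ c₂ : (C.deleteEdges (C.edgeCut V)).ConnectedComponent,
        c₁ ≠ c₂ ∧ A ⊆ c₁.supp ∧ B ⊆ c₂.supp := by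
      refine ⟨_, _, mt ConnectedComponent.eq.1 (not_reachable_deleteEdges_edgeCut hx hy),
        fun a ha => ConnectedComponent.eq.2 ?_, fun b hb => ConnectedComponent.eq.2 ?_⟩
      · exact hcyc.reachable_deleteEdges_edgeCut hconn hcut (hA ha) hx
      · have := hcyc.reachable_deleteEdges_edgeCut hconn hcutc (hB hb) hy
        rwa [edgeCut_compl] at this
    rw [he] at hsides
    have hedge : ∀ e ∈ ({e₁, e₂} : Set (Sym2 X)), e ∈ C.edgeSet :=
      fun e h => edgeCut_subset_edgeSet (he ▸ h)
    exact ⟨A, B, rfl, e₁, e₂, hedge _ (Set.mem_insert _ _), hedge _ (Set.mem_insert_of_mem _ rfl),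
      hne, hsides⟩

theorem displaysSplit_inter_union (hcyc : C.IsCycles) (hconn : C.Preconnected)
    {A₁ B₁ A₂ B₂ : Set X} (h₁ : DisplaysSplit C s(A₁, B₁)) (h₂ : DisplaysSplit C s(A₂, B₂))
    (hm : mCond A₁ B₁ A₂ B₂) : DisplaysSplit C s(A₁ ∩ A₂, B₁ ∪ B₂) := by
  rw [displaysSplit_mk_iff hcyc hconn] at h₁ h₂ ⊢
  obtain ⟨V, hA₁, hB₁, hV⟩ := h₁
  obtain ⟨W, hA₂, hB₂, hW⟩ := h₂
  obtain ⟨a, ha₁, ha₂⟩ := hm.1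
  obtain ⟨b, hb₁, hb₂⟩ := hm.2
  have hinter : 2 ≤ (C.edgeCut (V ∩ W)).ncard :=
    hcyc.two_le_ncard_edgeCut hconn ⟨hA₁ ha₁, hA₂ ha₂⟩ fun hb => hB₁ hb₁ hb.1
  have hunion : 2 ≤ (C.edgeCut (V ∪ W)).ncard :=
    hcyc.two_le_ncard_edgeCut hconn (Or.inl (hA₁ ha₁)) fun hb => hb.elim (hB₁ hb₁) (hB₂ hb₂)
  have hsub := ncard_edgeCut_inter_add_ncard_edgeCut_union_le (G := C) V W
  refine ⟨V ∩ W, Set.inter_subset_inter hA₁ hA₂, ?_, by omega⟩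
  rw [Set.compl_inter]
  exact Set.union_subset_union hB₁ hB₂

theorem displaysColl_mOut (hcyc : C.IsCycles) (hconn : C.Preconnected)
    {A₁ B₁ A₂ B₂ : Set X} (h₁ : DisplaysSplit C s(A₁, B₁)) (h₂ : DisplaysSplit C s(A₂, B₂))
    (hm : mCond A₁ B₁ A₂ B₂) : DisplaysColl C (mOut A₁ B₁ A₂ B₂) := by
  rintro S (rfl | rfl | rfl | rfl)
  · exact h₁
  · exact h₂
  · exact displaysSplit_inter_union hcyc hconn h₁ h₂ hm
  · rw [Sym2.eq_swap] at h₁ h₂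
    exact displaysSplit_inter_union hcyc hconn h₁ h₂ ⟨hm.2, hm.1⟩

end Display

section Splits

theorem splitExtends_mk_iff {A B A' B' : Set X} :
    SplitExtends s(A, B) s(A', B') ↔ A' ⊆ A ∧ B' ⊆ B ∨ A' ⊆ B ∧ B' ⊆ A := by
  constructor
  · rintro ⟨P, Q, P', Q', h, h', hP, hQ⟩
    rcases Sym2.eq_iff.1 h with ⟨rfl, rfl⟩ | ⟨rfl, rfl⟩ <;>
      rcases Sym2.eq_iff.1 h' with ⟨rfl, rfl⟩ | ⟨rfl, rfl⟩ <;> tauto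
  · rintro (⟨hA, hB⟩ | ⟨hA, hB⟩)
    · exact ⟨A, B, A', B', rfl, rfl, hA, hB⟩
    · exact ⟨B, A, A', B', Sym2.eq_swap, rfl, hA, hB⟩

theorem splitExtends_refl (S : Sym2 (Set X)) : SplitExtends S S := by
  induction S using Sym2.ind
  exact splitExtends_mk_iff.2 (Or.inl ⟨subset_rfl, subset_rfl⟩)

theorem SplitExtends.trans {S T R : Sym2 (Set X)} (h₁ : SplitExtends S T)
    (h₂ : SplitExtends T R) : SplitExtends S R := by
  induction S using Sym2.ind
  induction T using Sym2.ind
  induction R using Sym2.ind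
  rw [splitExtends_mk_iff] at *
  rcases h₁ with ⟨h₁, h₁'⟩ | ⟨h₁, h₁'⟩ <;> rcases h₂ with ⟨h₂, h₂'⟩ | ⟨h₂, h₂'⟩
  · exact Or.inl ⟨h₂.trans h₁, h₂'.trans h₁'⟩
  · exact Or.inr ⟨h₂.trans h₁', h₂'.trans h₁⟩
  · exact Or.inr ⟨h₂.trans h₁, h₂'.trans h₁'⟩
  · exact Or.inl ⟨h₂.trans h₁', h₂'.trans h₁⟩

theorem SplitExtends.antisymm {S T : Sym2 (Set X)} (h₁ : SplitExtends S T)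
    (h₂ : SplitExtends T S) : S = T := by
  induction S using Sym2.ind with | _ A B => ?_
  induction T using Sym2.ind with | _ A' B' => ?_
  rw [splitExtends_mk_iff] at h₁ h₂
  rcases h₁ with ⟨h₁, h₁'⟩ | ⟨h₁, h₁'⟩ <;> rcases h₂ with ⟨h₂, h₂'⟩ | ⟨h₂, h₂'⟩
  · exact Sym2.eq_iff.2 (Or.inl ⟨h₂.antisymm h₁, h₂'.antisymm h₁'⟩)
  · exact Sym2.eq_iff.2 (Or.inl
      ⟨(h₂.trans (h₁'.trans h₂')).antisymm h₁, (h₂'.trans (h₁.trans h₂)).antisymm h₁'⟩)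
  · exact Sym2.eq_iff.2 (Or.inl
      ⟨h₂.antisymm (h₁.trans (h₂'.trans h₁')), h₂'.antisymm (h₁'.trans (h₂.trans h₁))⟩)
  · exact Sym2.eq_iff.2 (Or.inr ⟨h₂.antisymm h₁', h₂'.antisymm h₁⟩)

theorem sreduce_subset (U : Set (Sym2 (Set X))) : sreduce U ⊆ U := fun _ hS => hS.1

/-- A maximal extension is found as one whose up-set in `U` is smallest; this works because
`SplitExtends` is antisymmetric. -/
theorem exists_mem_sreduce_splitExtends {U : Set (Sym2 (Set X))} (hU : U.Finite)
    {S : Sym2 (Set X)} (hS : S ∈ U) : ∃ T ∈ sreduce U, SplitExtends T S := by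
  let up (T : Sym2 (Set X)) : Set (Sym2 (Set X)) := {R ∈ U | SplitExtends R T}
  obtain ⟨T, ⟨hTU, hTS⟩, hmin⟩ := Set.exists_min_image (up S) (fun T => (up T).ncard)
    (hU.subset fun _ h => h.1) ⟨S, hS, splitExtends_refl S⟩
  refine ⟨T, ⟨hTU, ?_⟩, hTS⟩
  rintro ⟨R, hRU, hRT, hext⟩
  have hssub : up R ⊂ up T := by
    have hsub : up R ⊆ up T := fun Q hQ => ⟨hQ.1, hQ.2.trans hext⟩
    refine (Set.ssubset_iff_of_subset hsub).2 ⟨T, ?_, ?_⟩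
    · exact ⟨hTU, splitExtends_refl T⟩
    · exact fun hT => hRT (hext.antisymm hT.2)
  exact (hmin R ⟨hRU, hext.trans hTS⟩).not_gt (Set.ncard_lt_ncard hssub (hU.subset fun _ h => h.1))

theorem DisplaysSplit.of_splitExtends {C : SimpleGraph X} {S T : Sym2 (Set X)}
    (hd : DisplaysSplit C T) (he : SplitExtends T S) : DisplaysSplit C S := by
  obtain ⟨A, B, A', B', hT, rfl, hA, hB⟩ := he
  obtain ⟨P, Q, hPQ, e₁, e₂, he₁, he₂, hne, c₁, c₂, hc, hP, hQ⟩ := hd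
  rcases Sym2.eq_iff.1 (hT.symm.trans hPQ) with ⟨rfl, rfl⟩ | ⟨rfl, rfl⟩
  · exact ⟨A', B', rfl, e₁, e₂, he₁, he₂, hne, c₁, c₂, hc, hA.trans hP, hB.trans hQ⟩
  · exact ⟨A', B', rfl, e₁, e₂, he₁, he₂, hne, c₂, c₁, hc.symm, hA.trans hQ, hB.trans hP⟩

end Splits

theorem statement7_general {X : Type*} [Fintype X] (Sig Sig' : Set (Sym2 (Set X))) (C : SimpleGraph X)
    (hC : IsXCycle C)
    (hstep : mStep Sig Sig') :
    DisplaysColl C Sig ↔ DisplaysColl C Sig' := by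
  obtain ⟨A₁, B₁, A₂, B₂, h₁, h₂, -, hm, rfl⟩ := hstep
  have hconn : C.Preconnected := hC.1.preconnected
  have hcyc : C.IsCycles := fun v _ => hC.2.2 v
  constructor
  · intro hd S hS
    rcases sreduce_subset _ hS with hS | hS
    · exact hd S hS
    · exact displaysColl_mOut hcyc hconn (hd _ h₁) (hd _ h₂) hm S hS
  · intro hd S hS
    obtain ⟨T, hT, hTS⟩ :=
      exists_mem_sreduce_splitExtends (Set.toFinite _) (Set.mem_union_left (mOut A₁ B₁ A₂ B₂) hS)
    exact (hd T hT).of_splitExtends hTS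

/-- if `Σ, Σ' ∈ P(X)`, `C` is an `X`-cycle and `Σ'` is obtained from `Σ` by a
single application of the `M`-rule, then `Σ` is displayed by `C` iff `Σ'` is displayed by `C`. -/
theorem statement7 {X : Type*} [Fintype X] (Sig Sig' : Set (Sym2 (Set X))) (C : SimpleGraph X)
    (hSig : InPX Sig) (hSig' : InPX Sig') (hC : IsXCycle C)
    (hstep : mStep Sig Sig') :
    DisplaysColl C Sig ↔ DisplaysColl C Sig' :=
  statement7_general Sig Sig' C hC hstep
end

section
/- Suppose Σ = {Sᵢ = Aᵢ|Ãᵢ : i = 1,2,3} ∈ P(X) is an irreducible collection of three partial splits of X such that A₁ ⊆ A₂ and Ã₂ − Ã₁ ⊆ Ã₃ ⊆ Ã₁ ∪ Ã₂. If the Y-rule applies to Σ (i.e. some choice of parts of S₁, S₂, S₃ satisfies the condition of θ_Y), then θ_Y(Σ)⁻ = {(Ã₁∪Ã₂)|A₁, S₂, S₃} = {S₃} ∪ θ_M(S₁,S₂)⁻, where θ_M is applied with respect to the parts A₁, A₂. -/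
/-!
Common definitions: partial splits of a finite set `X`, modelled as unordered
pairs (`Sym2`) of nonempty disjoint subsets of `X`; the `M`-, `Y`- and `Z`-
closure rules; weak compatibility; `X`-cycles and display; split closure
sequences and split closures.
-/

variable {X : Type*}

private lemma splitExtends_iff' {X : Type*} (P Q R W : Set X) :
    SplitExtends s(P, Q) s(R, W) ↔ (R ⊆ P ∧ W ⊆ Q) ∨ (R ⊆ Q ∧ W ⊆ P) := by
  constructor
  · rintro ⟨A, B, C, D, h1, h2, h3, h4⟩
    rw [Sym2.eq_iff] at h1 h2
    rcases h1 with ⟨rfl, rfl⟩ | ⟨rfl, rfl⟩ <;> rcases h2 with ⟨rfl, rfl⟩ | ⟨rfl, rfl⟩ <;> tauto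
  · rintro (⟨h1, h2⟩ | ⟨h1, h2⟩)
    · exact ⟨P, Q, R, W, rfl, rfl, h1, h2⟩
    · exact ⟨Q, P, R, W, Sym2.eq_swap, rfl, h1, h2⟩

/-- if `Σ = {S₁,S₂,S₃} ∈ P(X)` with `A₁ ⊆ A₂` and
`B₂ − B₁ ⊆ B₃ ⊆ B₁ ∪ B₂`, and the `Y`-rule applies to `Σ` (for some choice of parts),
then `θ_Y(Σ)⁻ = {(B₁∪B₂)|A₁, S₂, S₃} = {S₃} ∪ θ_M(S₁,S₂)⁻`. -/
theorem statement8 {X : Type*} [Fintype X] (A1 B1 A2 B2 A3 B3 : Set X)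
    (hA1 : A1.Nonempty) (hB1 : B1.Nonempty) (hd1 : Disjoint A1 B1)
    (hA2 : A2.Nonempty) (hB2 : B2.Nonempty) (hd2 : Disjoint A2 B2)
    (hA3 : A3.Nonempty) (hB3 : B3.Nonempty) (hd3 : Disjoint A3 B3)
    (hne12 : s(A1, B1) ≠ s(A2, B2)) (hne13 : s(A1, B1) ≠ s(A3, B3))
    (hne23 : s(A2, B2) ≠ s(A3, B3))
    (hPX : InPX ({s(A1, B1), s(A2, B2), s(A3, B3)} : Set (Sym2 (Set X))))
    (hsub12 : A1 ⊆ A2) (hsub3 : B2 \ B1 ⊆ B3) (hsub3' : B3 ⊆ B1 ∪ B2) :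
    ∀ C1 D1 C2 D2 C3 D3 : Set X,
      s(C1, D1) = s(A1, B1) → s(C2, D2) = s(A2, B2) → s(C3, D3) = s(A3, B3) →
      yCond C1 D1 C2 D2 C3 D3 →
      sreduce (yOut C1 D1 C2 D2 C3 D3) =
          ({s(B1 ∪ B2, A1), s(A2, B2), s(A3, B3)} : Set (Sym2 (Set X))) ∧
      sreduce (yOut C1 D1 C2 D2 C3 D3) =
          insert (s(A3, B3)) (sreduce (mOut A1 B1 A2 B2)) := by
  intro C1 D1 C2 D2 C3 D3 e1 e2 e3 hy
  have hA1B1 : ∀ x, x ∈ A1 → x ∈ B1 → False := fun x h1 h2 =>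
    Set.disjoint_left.mp hd1 h1 h2
  have hA1B2 : ∀ x, x ∈ A1 → x ∈ B2 → False := fun x h1 h2 =>
    Set.disjoint_left.mp hd2 (hsub12 h1) h2
  have hA1B3 : ∀ x, x ∈ A1 → x ∈ B3 → False := fun x h1 h3 =>
    (hsub3' h3).elim (hA1B1 x h1) (hA1B2 x h1)
  rw [Sym2.eq_iff] at e1 e2 e3
  rcases e1 with ⟨h1a, h1b⟩ | ⟨h1a, h1b⟩ <;>
    rcases e2 with ⟨h2a, h2b⟩ | ⟨h2a, h2b⟩ <;>
      rcases e3 with ⟨h3a, h3b⟩ | ⟨h3a, h3b⟩ <;>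
        rw [h1a, h1b, h2a, h2b, h3a, h3b] at hy ⊢
  -- main case: natural orientation
  · obtain ⟨hy1, hy2, hy3, -⟩ := hy
    have hirr : ∀ S ∈ ({s(A1, B1), s(A2, B2), s(A3, B3)} : Set (Sym2 (Set X))),
        ∀ T ∈ ({s(A1, B1), s(A2, B2), s(A3, B3)} : Set (Sym2 (Set X))),
        T ≠ S → ¬ SplitExtends T S := by
      intro S hS T hT hne hext
      have h2 := hPX.2
      rw [← h2] at hS
      exact hS.2 ⟨T, hT, hne, hext⟩
    have nB1B2 : ¬ B1 ⊆ B2 := by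
      intro h
      exact hirr s(A1, B1) (by simp) s(A2, B2) (by simp) hne12.symm
        ((splitExtends_iff' _ _ _ _).2 (Or.inl ⟨hsub12, h⟩))
    have nA2A1 : ¬ A2 ⊆ A1 := by
      intro h
      obtain ⟨x, hx⟩ := hy3
      exact hA1B1 x (h hx.1.2) hx.1.1
    have nA3A1 : ¬ A3 ⊆ A1 := by
      intro h
      obtain ⟨x, hx⟩ := hy2
      exact hA1B1 x (h hx.2) hx.1.1
    have n21 : ¬ SplitExtends s(A2, B2) s(B1 ∪ B2, A1) := by
      rw [splitExtends_iff']
      rintro (⟨h1, h2⟩ | ⟨h1, h2⟩)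
      · obtain ⟨x, hx⟩ := hB2
        exact Set.disjoint_left.mp hd2 (h1 (Set.mem_union_right _ hx)) hx
      · exact nB1B2 fun x hx => h1 (Set.mem_union_left _ hx)
    have n31 : ¬ SplitExtends s(A3, B3) s(B1 ∪ B2, A1) := by
      rw [splitExtends_iff']
      rintro (⟨h1, h2⟩ | ⟨h1, h2⟩)
      · obtain ⟨x, hx⟩ := hA1
        exact hA1B3 x hx (h2 hx)
      · exact hirr s(A1, B1) (by simp) s(A3, B3) (by simp) hne13.symm
          ((splitExtends_iff' _ _ _ _).2
            (Or.inl ⟨h2, fun x hx => h1 (Set.mem_union_left _ hx)⟩))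
    have n12 : ¬ SplitExtends s(B1 ∪ B2, A1) s(A2, B2) := by
      rw [splitExtends_iff']
      rintro (⟨h1, h2⟩ | ⟨h1, h2⟩)
      · obtain ⟨x, hx⟩ := hB2
        exact hA1B2 x (h2 hx) hx
      · exact nA2A1 h1
    have n13 : ¬ SplitExtends s(B1 ∪ B2, A1) s(A3, B3) := by
      rw [splitExtends_iff']
      rintro (⟨h1, h2⟩ | ⟨h1, h2⟩)
      · obtain ⟨x, hx⟩ := hB3
        exact hA1B3 x (h2 hx) hx
      · exact nA3A1 h1
    have n23 : ¬ SplitExtends s(A2, B2) s(A3, B3) :=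
      hirr s(A3, B3) (by simp) s(A2, B2) (by simp) hne23
    have n32 : ¬ SplitExtends s(A3, B3) s(A2, B2) :=
      hirr s(A2, B2) (by simp) s(A3, B3) (by simp) hne23.symm
    have key1 : B1 ∪ B2 ∩ B3 = B1 ∪ B2 := by
      apply Set.Subset.antisymm
      · exact Set.union_subset_union_right _ Set.inter_subset_left
      · rintro x (hx | hx)
        · exact Set.mem_union_left _ hx
        · by_cases hb : x ∈ B1
          · exact Set.mem_union_left _ hb
          · exact Set.mem_union_right _ ⟨hx, hsub3 ⟨hx, hb⟩⟩
    have key2 : A2 ∪ A1 ∩ B3 = A2 := by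
      apply Set.Subset.antisymm
      · apply Set.union_subset (subset_refl _)
        intro x hx
        exact (hA1B3 x hx.1 hx.2).elim
      · exact Set.subset_union_left
    have key3 : A3 ∪ A1 ∩ B2 = A3 := by
      apply Set.Subset.antisymm
      · apply Set.union_subset (subset_refl _)
        intro x hx
        exact (hA1B2 x hx.1 hx.2).elim
      · exact Set.subset_union_left
    have hyOut : yOut A1 B1 A2 B2 A3 B3 =
        ({s(B1 ∪ B2, A1), s(A2, B2), s(A3, B3)} : Set (Sym2 (Set X))) := by
      unfold yOut
      rw [key1, key2, key3]
    have hred1 : sreduce ({s(B1 ∪ B2, A1), s(A2, B2), s(A3, B3)} : Set (Sym2 (Set X))) =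
        ({s(B1 ∪ B2, A1), s(A2, B2), s(A3, B3)} : Set (Sym2 (Set X))) := by
      apply Set.Subset.antisymm
      · intro S hS; exact hS.1
      · intro S hS
        refine ⟨hS, ?_⟩
        rintro ⟨T, hT, hne, hext⟩
        simp only [Set.mem_insert_iff, Set.mem_singleton_iff] at hS hT
        rcases hS with rfl | rfl | rfl <;> rcases hT with rfl | rfl | rfl <;>
          first
            | exact hne rfl
            | exact n21 hext
            | exact n31 hext
            | exact n12 hext
            | exact n32 hext
            | exact n13 hext
            | exact n23 hext
    have hmOut : mOut A1 B1 A2 B2 =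
        ({s(A1, B1), s(A2, B2), s(A1, B1 ∪ B2), s(B1 ∩ B2, A2)} : Set (Sym2 (Set X))) := by
      unfold mOut
      rw [Set.inter_eq_left.mpr hsub12, Set.union_eq_right.mpr hsub12]
    have hred2 : sreduce (mOut A1 B1 A2 B2) =
        ({s(B1 ∪ B2, A1), s(A2, B2)} : Set (Sym2 (Set X))) := by
      apply Set.Subset.antisymm
      · intro S hS
        obtain ⟨hSm, hnr⟩ := hS
        rw [hmOut] at hSm
        simp only [Set.mem_insert_iff, Set.mem_singleton_iff] at hSm ⊢
        rcases hSm with rfl | rfl | rfl | rfl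
        · by_cases hc : B2 ⊆ B1
          · left
            rw [Set.union_eq_left.mpr hc]
            exact Sym2.eq_swap
          · exfalso
            apply hnr
            refine ⟨s(A1, B1 ∪ B2), ?_, ?_, ?_⟩
            · rw [hmOut]
              simp only [Set.mem_insert_iff, Set.mem_singleton_iff]
              tauto
            · intro h
              rw [Sym2.eq_iff] at h
              rcases h with ⟨-, h⟩ | ⟨h, -⟩
              · exact hc fun x hx => h ▸ Set.mem_union_right _ hx
              · obtain ⟨x, hx⟩ := hA1
                exact hA1B1 x hx (h ▸ hx)
            · exact (splitExtends_iff' _ _ _ _).2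
                (Or.inl ⟨subset_refl _, Set.subset_union_left⟩)
        · right; rfl
        · left; exact Sym2.eq_swap
        · by_cases hc : B2 ⊆ B1
          · right
            rw [Set.inter_eq_right.mpr hc]
            exact Sym2.eq_swap
          · exfalso
            apply hnr
            refine ⟨s(A2, B2), ?_, ?_, ?_⟩
            · rw [hmOut]
              simp only [Set.mem_insert_iff, Set.mem_singleton_iff]
              tauto
            · intro h
              rw [Sym2.eq_iff] at h
              rcases h with ⟨-, h⟩ | ⟨-, h⟩
              · obtain ⟨x, hx⟩ := hB2
                exact Set.disjoint_left.mp hd2 (h ▸ hx) hx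
              · exact hc fun x hx => ((h ▸ hx : x ∈ B1 ∩ B2)).1
            · exact (splitExtends_iff' _ _ _ _).2
                (Or.inr ⟨Set.inter_subset_right, subset_refl _⟩)
      · intro S hS
        simp only [Set.mem_insert_iff, Set.mem_singleton_iff] at hS
        have hT1mem : s(B1 ∪ B2, A1) ∈ mOut A1 B1 A2 B2 := by
          rw [hmOut]
          simp only [Set.mem_insert_iff, Set.mem_singleton_iff]
          right; right; left
          exact Sym2.eq_swap
        have hS2mem : s(A2, B2) ∈ mOut A1 B1 A2 B2 := by
          rw [hmOut]
          simp only [Set.mem_insert_iff, Set.mem_singleton_iff]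
          tauto
        rcases hS with rfl | rfl
        · refine ⟨hT1mem, ?_⟩
          rintro ⟨T, hT, hne, hext⟩
          rw [hmOut] at hT
          simp only [Set.mem_insert_iff, Set.mem_singleton_iff] at hT
          rcases hT with rfl | rfl | rfl | rfl
          · rw [splitExtends_iff'] at hext
            rcases hext with ⟨h1, h2⟩ | ⟨h1, h2⟩
            · obtain ⟨x, hx⟩ := hA1
              exact hA1B1 x hx (h2 hx)
            · apply hne
              have hc : B2 ⊆ B1 := fun x hx => h1 (Set.mem_union_right _ hx)
              rw [Set.union_eq_left.mpr hc]
              exact Sym2.eq_swap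
          · exact n21 hext
          · exact hne Sym2.eq_swap
          · rw [splitExtends_iff'] at hext
            rcases hext with ⟨h1, h2⟩ | ⟨h1, h2⟩
            · exact nB1B2 fun x hx => (h1 (Set.mem_union_left _ hx)).2
            · obtain ⟨x, hx⟩ := hA1
              exact hA1B1 x hx (h2 hx).1
        · refine ⟨hS2mem, ?_⟩
          rintro ⟨T, hT, hne, hext⟩
          rw [hmOut] at hT
          simp only [Set.mem_insert_iff, Set.mem_singleton_iff] at hT
          rcases hT with rfl | rfl | rfl | rfl
          · rw [splitExtends_iff'] at hext
            rcases hext with ⟨h1, h2⟩ | ⟨h1, h2⟩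
            · exact nA2A1 h1
            · obtain ⟨x, hx⟩ := hB2
              exact hA1B2 x (h2 hx) hx
          · exact hne rfl
          · rw [show s(A1, B1 ∪ B2) = s(B1 ∪ B2, A1) from Sym2.eq_swap] at hext
            exact n12 hext
          · rw [splitExtends_iff'] at hext
            rcases hext with ⟨h1, h2⟩ | ⟨h1, h2⟩
            · obtain ⟨x, hx⟩ := hB2
              exact Set.disjoint_left.mp hd2 (h2 hx) hx
            · apply hne
              have hc : B2 ⊆ B1 := fun x hx => (h2 hx).1
              rw [Set.inter_eq_right.mpr hc]
              exact Sym2.eq_swap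
    constructor
    · rw [hyOut]
      exact hred1
    · rw [hyOut, hred1, hred2]
      ext x
      simp only [Set.mem_insert_iff, Set.mem_singleton_iff]
      tauto
  · obtain ⟨x, hx⟩ := hy.1
    exact (hA1B3 x hx.1.1 hx.2).elim
  · obtain ⟨x, hx⟩ := hy.1
    exact (hA1B2 x hx.1.1 hx.1.2).elim
  · obtain ⟨x, hx⟩ := hy.1
    exact (hA1B2 x hx.1.1 hx.1.2).elim
  · obtain ⟨x, hx⟩ := hy.2.1
    exact (hA1B2 x hx.1.1 hx.1.2).elim
  · obtain ⟨x, hx⟩ := hy.2.1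
    exact (hA1B2 x hx.1.1 hx.1.2).elim
  · obtain ⟨x, hx⟩ := hy.2.2.1
    exact (hA1B2 x hx.1.1 hx.1.2).elim
  · obtain ⟨x, hx⟩ := hy.2.1
    exact (hA1B3 x hx.1.1 hx.2).elim
end
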